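/- For rationals a, d with d > 0, write a = a_1/a_2 and d = d_1/d_2 in lowest terms with a_2, d_2 > 0. Then the Fourier transform of χ_{a+dℤ} (with respect to the Haar distribution normalized so that ℤ has measure 1) is given by ŷ ↦ (1/d)·e^{-2πi a y}·χ_{(1/d)ℤ}(y). -/

import Mathlib

open Complex

/-- `e(z) = exp(2πiz)`. -/
noncomputable def e (z : ℂ) : ℂ := Complex.exp (2 * Real.pi * I * z)

open Classical in
/-- The (ℂ-valued) characteristic function of the arithmetic progression `a + dℤ` in `ℚ`. -/
noncomputable def ind (a d : ℚ) : ℚ → ℂ :=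
  fun x => if ∃ k : ℤ, x = a + d * k then 1 else 0

/-- `S(ℚ)` with complex coefficients: the span of the characteristic functions of
arithmetic progressions `a + dℤ` with `d > 0`. -/
noncomputable def Sc : Submodule ℂ (ℚ → ℂ) :=
  Submodule.span ℂ {f | ∃ a d : ℚ, 0 < d ∧ f = ind a d}

/-! Translation invariance together with the splitting of `a + cℤ` into the `n` progressions
`a + kc + ncℤ`, `0 ≤ k < n`, shows `h(χ_{a+dℤ}) = n · h(χ_{a+ndℤ})`; writing `d = p/q` and
comparing `χ_ℤ` and `χ_{dℤ}` with `χ_{(1/q)ℤ}` gives `h(χ_{a+dℤ}) = 1/d`.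

Translating `x ↦ χ_{a+dℤ}(x) e(-xy)` by `d` multiplies it by `e(-dy)`. If `dy ∉ ℤ` this factor
is not `1`, so invariance forces the transform to vanish; if `dy ∈ ℤ` the character is constant,
equal to `e(-ay)`, on `a + dℤ`. -/

lemma e_add (z w : ℂ) : e (z + w) = e z * e w := by
  simp only [e, mul_add, Complex.exp_add]

lemma e_intCast (n : ℤ) : e n = 1 := by
  rw [e, mul_comm]
  exact Complex.exp_int_mul_two_pi_mul_I n

lemma e_ratCast_ne_one {q : ℚ} (hq : ∀ n : ℤ, q ≠ n) : e q ≠ 1 := by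
  rw [e, Ne, Complex.exp_eq_one_iff]
  rintro ⟨n, hn⟩
  have h2πi : (2 * Real.pi * I : ℂ) ≠ 0 := by simp [Real.pi_ne_zero, Complex.I_ne_zero]
  exact hq n (by exact_mod_cast mul_left_cancel₀ h2πi (hn.trans (mul_comm _ _)))

lemma ind_apply_of_exists {a d x : ℚ} (hx : ∃ k : ℤ, x = a + d * k) : ind a d x = 1 :=
  if_pos hx

lemma ind_apply_of_not_exists {a d x : ℚ} (hx : ¬∃ k : ℤ, x = a + d * k) : ind a d x = 0 :=
  if_neg hx

lemma ind_mem_Sc (a d : ℚ) (hd : 0 < d) : ind a d ∈ Sc :=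
  Submodule.subset_span ⟨a, d, hd, rfl⟩

lemma ind_comp_add_right (a d t : ℚ) : (fun x => ind a d (x + t)) = ind (a - t) d := by
  funext x
  simp only [ind]
  congr 1
  exact propext <| exists_congr fun k => ⟨fun hk => by linarith, fun hk => by linarith⟩

lemma ind_apply_add_self (a d x : ℚ) : ind a d (x + d) = ind a d x := by
  simp only [ind]
  congr 1
  exact propext ⟨fun ⟨k, hk⟩ => ⟨k - 1, by push_cast; linarith⟩,
    fun ⟨k, hk⟩ => ⟨k + 1, by push_cast; linarith⟩⟩

lemma Int.exists_eq_add_mul_iff_eq_emod {m k n : ℤ} (hk₀ : 0 ≤ k) (hkn : k < n) :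
    (∃ j : ℤ, m = k + n * j) ↔ k = m % n := by
  constructor
  · rintro ⟨j, rfl⟩
    rw [Int.add_mul_emod_self_left, Int.emod_eq_of_lt hk₀ hkn]
  · rintro rfl
    exact ⟨m / n, (Int.emod_add_mul_ediv m n).symm⟩

lemma ind_eq_sum_ind (a c : ℚ) (hc : c ≠ 0) {n : ℕ} (hn : 0 < n) :
    ind a c = ∑ k ∈ Finset.range n, ind (a + k * c) (n * c) := by
  funext x
  rw [Finset.sum_apply]
  by_cases hx : ∃ m : ℤ, x = a + c * m
  · obtain ⟨m, rfl⟩ := hx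
    have hterm : ∀ k ∈ Finset.range n,
        ind (a + k * c) (n * c) (a + c * m) = if k = (m % n).toNat then 1 else 0 := by
      intro k hk
      have hkn : (k : ℤ) < n := by exact_mod_cast Finset.mem_range.mp hk
      have hm : (∃ j : ℤ, a + c * m = a + k * c + n * c * j) ↔ ∃ j : ℤ, m = k + n * j :=
        exists_congr fun j => by
          rw [← Int.cast_inj (α := ℚ)]
          push_cast
          exact ⟨fun h => mul_left_cancel₀ hc (by linear_combination h), fun h => by rw [h]; ring⟩
      simp only [ind, hm, Int.exists_eq_add_mul_iff_eq_emod (Int.natCast_nonneg k) hkn]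
      congr 1
      have := Int.emod_nonneg m (by omega : (n : ℤ) ≠ 0)
      exact propext (by omega)
    rw [ind_apply_of_exists ⟨m, rfl⟩, Finset.sum_congr rfl hterm, Finset.sum_ite_eq', if_pos]
    have := Int.emod_lt_of_pos m (by omega : (0 : ℤ) < n)
    exact Finset.mem_range.mpr (by omega)
  · refine (ind_apply_of_not_exists hx).trans (Finset.sum_eq_zero fun k _ => ?_).symm
    refine ind_apply_of_not_exists fun ⟨j, hj⟩ => hx ⟨k + n * j, ?_⟩
    rw [hj]; push_cast; ring

lemma ind_mul_e_eq_smul_ind {a d y : ℚ} (hdy : ∃ m : ℤ, d * y = m) :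
    (fun x => ind a d x * e (-((x : ℂ) * (y : ℂ)))) = e (-((a : ℂ) * (y : ℂ))) • ind a d := by
  funext x
  by_cases hx : ∃ k : ℤ, x = a + d * k
  · obtain ⟨k, rfl⟩ := hx
    obtain ⟨m, hm⟩ := hdy
    have hmC : (d : ℂ) * y = m := by exact_mod_cast hm
    have harg : -(((a + d * k : ℚ) : ℂ) * y) = -((a : ℂ) * y) + ((-(k * m) : ℤ) : ℂ) := by
      push_cast
      linear_combination (-(k : ℂ)) * hmC
    simp only [harg, e_add, e_intCast, ind_apply_of_exists ⟨k, rfl⟩, Pi.smul_apply, smul_eq_mul,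
      mul_one, one_mul]
  · simp only [ind_apply_of_not_exists hx, Pi.smul_apply, smul_eq_mul, zero_mul, mul_zero]

lemma ind_mul_e_comp_add_self (a d y : ℚ) :
    (fun x => ind a d (x + d) * e (-(((x + d : ℚ) : ℂ) * (y : ℂ))))
      = e (-((d : ℂ) * (y : ℂ))) • fun x => ind a d x * e (-((x : ℂ) * (y : ℂ))) := by
  funext x
  have harg : -(((x + d : ℚ) : ℂ) * y) = -((d : ℂ) * y) + -((x : ℂ) * y) := by
    push_cast; ring
  rw [ind_apply_add_self, harg, e_add, Pi.smul_apply, smul_eq_mul]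
  ring

def IsTranslationInvariant (h : Sc →ₗ[ℂ] ℂ) : Prop :=
  ∀ (t : ℚ) (f : ℚ → ℂ) (hf : f ∈ Sc) (hf' : (fun x => f (x + t)) ∈ Sc),
    h ⟨fun x => f (x + t), hf'⟩ = h ⟨f, hf⟩

namespace IsTranslationInvariant

variable {h : Sc →ₗ[ℂ] ℂ}

lemma map_ind (hinv : IsTranslationInvariant h) (a d : ℚ) (hd : 0 < d) :
    h ⟨ind a d, ind_mem_Sc a d hd⟩ = h ⟨ind 0 d, ind_mem_Sc 0 d hd⟩ := by
  have hshift : (fun x => ind a d (x + a)) = ind 0 d := by rw [ind_comp_add_right, sub_self]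
  exact (hinv a (ind a d) _ (hshift ▸ ind_mem_Sc 0 d hd)).symm.trans
    (congrArg h (Subtype.ext hshift))

lemma map_ind_zero_eq_mul (hinv : IsTranslationInvariant h) {c : ℚ} (hc : 0 < c) {n : ℕ}
    (hn : 0 < n) :
    h ⟨ind 0 c, ind_mem_Sc 0 c hc⟩
      = n * h ⟨ind 0 (n * c), ind_mem_Sc _ _ (mul_pos (Nat.cast_pos.mpr hn) hc)⟩ := by
  have hnc : 0 < (n : ℚ) * c := by positivity
  have hsum : (⟨ind 0 c, ind_mem_Sc 0 c hc⟩ : Sc)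
      = ∑ k ∈ Finset.range n, ⟨ind (k * c) (n * c), ind_mem_Sc _ _ hnc⟩ :=
    Subtype.ext (by simp [ind_eq_sum_ind 0 c hc.ne' hn, AddSubmonoidClass.coe_finsetSum])
  rw [hsum, map_sum, Finset.sum_congr rfl fun k _ => hinv.map_ind _ _ hnc, Finset.sum_const,
    Finset.card_range, nsmul_eq_mul]

lemma map_ind_zero (hinv : IsTranslationInvariant h)
    (hnorm : h ⟨ind 0 1, ind_mem_Sc 0 1 one_pos⟩ = 1) (d : ℚ) (hd : 0 < d) :
    h ⟨ind 0 d, ind_mem_Sc 0 d hd⟩ = 1 / (d : ℂ) := by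
  obtain ⟨p, hp⟩ := Int.eq_ofNat_of_zero_le (Rat.num_pos.mpr hd).le
  set q := d.den
  have hq : 0 < q := d.den_pos
  have hp0 : 0 < p := by have := Rat.num_pos.mpr hd; omega
  have hdpq : (p : ℚ) * (1 / q) = d := by
    rw [mul_one_div, ← Rat.num_div_den d, hp]; rfl
  have hq' : (0 : ℚ) < 1 / q := by positivity
  have hviaq : h ⟨ind 0 (1 / q), ind_mem_Sc _ _ hq'⟩ = q := by
    rw [map_ind_zero_eq_mul hinv hq' hq]
    simp only [mul_one_div_cancel (by positivity : (q : ℚ) ≠ 0), hnorm, mul_one]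
  have hviap : h ⟨ind 0 (1 / q), ind_mem_Sc _ _ hq'⟩ = p * h ⟨ind 0 d, ind_mem_Sc 0 d hd⟩ := by
    rw [map_ind_zero_eq_mul hinv hq' hp0]
    simp only [hdpq]
  have hdC : (d : ℂ) = p / q := by rw [← hdpq]; push_cast; ring
  have hpC : (p : ℂ) ≠ 0 := by exact_mod_cast hp0.ne'
  rw [hdC, one_div_div, eq_div_iff hpC, mul_comm, ← hviap, hviaq]

lemma map_eq_zero_of_comp_add_eq_smul (hinv : IsTranslationInvariant h) {f : ℚ → ℂ}
    (hf : f ∈ Sc) {t : ℚ} {c : ℂ} (hc : c ≠ 1) (hft : (fun x => f (x + t)) = c • f) :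
    h ⟨f, hf⟩ = 0 := by
  have hinv_f := hinv t f hf (hft ▸ Sc.smul_mem c hf)
  rw [show (⟨_, hft ▸ Sc.smul_mem c hf⟩ : Sc) = c • ⟨f, hf⟩ from Subtype.ext hft, map_smul,
    smul_eq_mul] at hinv_f
  by_contra hne
  exact hc ((mul_eq_right₀ hne).mp hinv_f)

end IsTranslationInvariant

/-- For the Haar distribution `h_ℤ` on `S(ℚ)` (the translation-invariant distribution
normalized by `h_ℤ(χ_ℤ) = 1`), the Fourier transform of `χ_{a+dℤ}` is
`y ↦ (1/d)·e^{-2πi a y}·χ_{(1/d)ℤ}(y)`. -/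
theorem fourier_transform_ind
    (h : Sc →ₗ[ℂ] ℂ)
    (hnorm : ∀ hm : ind 0 1 ∈ Sc, h ⟨ind 0 1, hm⟩ = 1)
    (hinv : ∀ (t : ℚ) (f : ℚ → ℂ) (hf : f ∈ Sc) (hf' : (fun x => f (x + t)) ∈ Sc),
      h ⟨fun x => f (x + t), hf'⟩ = h ⟨f, hf⟩)
    (a d : ℚ) (hd : 0 < d) (y : ℚ)
    (hmem : (fun x => ind a d x * e (-((x : ℂ) * (y : ℂ)))) ∈ Sc) :
    h ⟨fun x => ind a d x * e (-((x : ℂ) * (y : ℂ))), hmem⟩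
      = (1 / (d : ℂ)) * e (-((a : ℂ) * (y : ℂ))) * ind 0 (1 / d) y := by
  have hinv : IsTranslationInvariant h := hinv
  by_cases hy : ∃ m : ℤ, y = 0 + 1 / d * m
  · have hdy : ∃ m : ℤ, d * y = m := hy.imp fun m hm => by rw [hm]; field_simp; ring
    rw [show (⟨_, hmem⟩ : Sc) = e (-((a : ℂ) * y)) • ⟨ind a d, ind_mem_Sc a d hd⟩ from
        Subtype.ext (ind_mul_e_eq_smul_ind hdy), map_smul, smul_eq_mul, hinv.map_ind a d hd,
      hinv.map_ind_zero (hnorm _) d hd, ind_apply_of_exists hy]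
    ring
  · have hne : e (-((d : ℂ) * y)) ≠ 1 := by
      have hcast : -((d : ℂ) * y) = ((-(d * y) : ℚ) : ℂ) := by push_cast; ring
      refine hcast ▸ e_ratCast_ne_one fun n hn => hy ⟨-n, ?_⟩
      field_simp
      push_cast
      linarith
    rw [hinv.map_eq_zero_of_comp_add_eq_smul hmem hne (ind_mul_e_comp_add_self a d y),
      ind_apply_of_not_exists hy, mul_zero]
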